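/- arXiv:2009.14500 — 5 statements merged into one kernel-verified Lean document; each statement's English description precedes it below -/
import Mathlib

section
/- For all real numbers c > 0 and α > 2, ∫₀^∞ ∫₀^∞ (1 − exp(−c (r² + t²)^{−α/2})) dt dr = (π/4) c^{2/α} Γ(1 − 2/α), where Γ is the real Gamma function. -/
/-!
In polar coordinates the quarter-plane integral of `g (r ^ 2 + t ^ 2)` is `π / 4 * ∫₀^∞ g`.
For `g u = 1 - exp (-(c * u ^ (-p)))` with `p = α / 2 > 1`, integrating by parts against `u`
gives `c * p * ∫₀^∞ u ^ (-p) * exp (-(c * u ^ (-p)))`, and the substitution `u = x⁻¹` turns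
this into the Gamma integral `c ^ (1 / p - 1) * Γ (1 - 1 / p) / p`.
-/

open MeasureTheory Real Set Filter Topology

section LaplaceExponent

variable {c p : ℝ}

lemma one_sub_exp_neg_nonneg {y : ℝ} (hy : 0 ≤ y) : 0 ≤ 1 - exp (-y) := by
  simpa using exp_le_one_iff.2 (neg_nonpos.2 hy)

lemma one_sub_exp_neg_le_self (y : ℝ) : 1 - exp (-y) ≤ y := by
  linarith [add_one_le_exp (-y)]

lemma one_sub_exp_neg_le_one (y : ℝ) : 1 - exp (-y) ≤ 1 := by
  linarith [exp_pos (-y)]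

lemma hasDerivAt_one_sub_exp_neg_mul_rpow_neg {x : ℝ} (hx : 0 < x) :
    HasDerivAt (fun x ↦ 1 - exp (-(c * x ^ (-p))))
      (-(c * p) * (x ^ (-p) * exp (-(c * x ^ (-p)))) / x) x := by
  refine ((((hasDerivAt_rpow_const (p := -p) (Or.inl hx.ne')).const_mul c).neg.exp).const_sub
    1).congr_deriv ?_
  simp only [Pi.neg_apply, rpow_sub_one hx.ne']
  ring

lemma tendsto_one_sub_exp_neg_mul_rpow_neg_mul_atTop (hc : 0 ≤ c) (hp : 1 < p) :
    Tendsto (fun x ↦ (1 - exp (-(c * x ^ (-p)))) * x) atTop (𝓝 0) := by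
  have hlim : Tendsto (fun x : ℝ ↦ c * x ^ (-(p - 1))) atTop (𝓝 0) := by
    simpa using (tendsto_rpow_neg_atTop (by linarith : 0 < p - 1)).const_mul c
  refine squeeze_zero' ?_ ?_ hlim
  · filter_upwards [eventually_gt_atTop 0] with x hx
    exact mul_nonneg (one_sub_exp_neg_nonneg (by positivity)) hx.le
  · filter_upwards [eventually_gt_atTop 0] with x hx
    calc (1 - exp (-(c * x ^ (-p)))) * x ≤ c * x ^ (-p) * x := by
          gcongr; exact one_sub_exp_neg_le_self _
      _ = c * x ^ (-(p - 1)) := by rw [neg_sub, sub_eq_neg_add, rpow_add_one hx.ne']; ring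

lemma tendsto_one_sub_exp_neg_mul_rpow_neg_mul_nhdsGT_zero (hc : 0 ≤ c) :
    Tendsto (fun x ↦ (1 - exp (-(c * x ^ (-p)))) * x) (𝓝[>] 0) (𝓝 0) := by
  refine squeeze_zero' ?_ ?_ (tendsto_nhdsWithin_of_tendsto_nhds tendsto_id)
  · filter_upwards [self_mem_nhdsWithin] with x (hx : 0 < x)
    exact mul_nonneg (one_sub_exp_neg_nonneg (by positivity)) hx.le
  · filter_upwards [self_mem_nhdsWithin] with x (hx : 0 < x)
    exact mul_le_of_le_one_left hx.le (one_sub_exp_neg_le_one _)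

lemma integrableOn_one_sub_exp_neg_mul_rpow_neg (hc : 0 ≤ c) (hp : 1 < p) :
    IntegrableOn (fun x ↦ 1 - exp (-(c * x ^ (-p)))) (Ioi 0) := by
  have hmeas : AEStronglyMeasurable (fun x : ℝ ↦ 1 - exp (-(c * x ^ (-p)))) := by fun_prop
  rw [← Ioc_union_Ioi_eq_Ioi zero_le_one, integrableOn_union]
  constructor
  · refine IntegrableOn.of_bound measure_Ioc_lt_top hmeas.restrict 1 ?_
    filter_upwards [ae_restrict_mem measurableSet_Ioc] with x hx
    rw [norm_of_nonneg (one_sub_exp_neg_nonneg (mul_nonneg hc (rpow_nonneg hx.1.le _)))]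
    exact one_sub_exp_neg_le_one _
  · have hdom := (integrableOn_Ioi_rpow_of_lt (a := -p) (by linarith) one_pos).const_mul c
    refine Integrable.mono' hdom hmeas.restrict ?_
    filter_upwards [ae_restrict_mem measurableSet_Ioi] with x (hx : 1 < x)
    rw [norm_of_nonneg (one_sub_exp_neg_nonneg (mul_nonneg hc (rpow_nonneg (by linarith) _)))]
    exact one_sub_exp_neg_le_self _

/-- The integrand of `integral_comp_rpow_Ioi` for the exponent `-1`. -/
lemma rpow_neg_mul_exp_neg_mul_rpow_neg_comp_inv {x : ℝ} (hx : 0 < x) :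
    (|(-1 : ℝ)| * x ^ ((-1 : ℝ) - 1)) •
        ((x ^ (-1 : ℝ)) ^ (-p) * exp (-(c * (x ^ (-1 : ℝ)) ^ (-p)))) =
      x ^ (p - 2) * exp (-c * x ^ p) := by
  rw [← rpow_mul hx.le, neg_one_mul, neg_neg, smul_eq_mul, abs_neg, abs_one, one_mul,
    ← mul_assoc, ← rpow_add hx, neg_mul]
  norm_num
  ring_nf

lemma integrableOn_rpow_neg_mul_exp_neg_mul_rpow_neg (hc : 0 < c) (hp : 1 < p) :
    IntegrableOn (fun x ↦ x ^ (-p) * exp (-(c * x ^ (-p)))) (Ioi 0) := by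
  rw [← integrableOn_Ioi_comp_rpow_iff _ (neg_ne_zero.2 one_ne_zero)]
  exact (integrableOn_rpow_mul_exp_neg_mul_rpow (by linarith) (by linarith) hc).congr_fun
    (fun x hx ↦ (rpow_neg_mul_exp_neg_mul_rpow_neg_comp_inv hx).symm) measurableSet_Ioi

lemma integral_rpow_neg_mul_exp_neg_mul_rpow_neg (hc : 0 < c) (hp : 1 < p) :
    ∫ x in Ioi 0, x ^ (-p) * exp (-(c * x ^ (-p))) = c ^ (1 / p - 1) * Gamma (1 - 1 / p) / p := by
  rw [← integral_comp_rpow_Ioi _ (neg_ne_zero.2 one_ne_zero), setIntegral_congr_fun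
      measurableSet_Ioi fun x hx ↦ rpow_neg_mul_exp_neg_mul_rpow_neg_comp_inv hx,
    integral_rpow_mul_exp_neg_mul_rpow (by linarith) (by linarith) hc]
  have hp0 : p ≠ 0 := by linarith
  rw [show -(p - 2 + 1) / p = 1 / p - 1 by field_simp; ring,
    show (p - 2 + 1) / p = 1 - 1 / p by field_simp; ring]
  ring

lemma integral_one_sub_exp_neg_mul_rpow_neg (hc : 0 < c) (hp : 1 < p) :
    ∫ x in Ioi 0, (1 - exp (-(c * x ^ (-p)))) = c ^ (1 / p) * Gamma (1 - 1 / p) := by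
  have hu'v : IntegrableOn (fun x ↦ -(c * p) * (x ^ (-p) * exp (-(c * x ^ (-p)))) / x * x)
      (Ioi 0) :=
    IntegrableOn.congr_fun
      ((integrableOn_rpow_neg_mul_exp_neg_mul_rpow_neg hc hp).const_mul (-(c * p)))
      (fun x (hx : 0 < x) ↦ by field_simp) measurableSet_Ioi
  have hibp := integral_Ioi_mul_deriv_eq_deriv_mul
    (fun x hx ↦ hasDerivAt_one_sub_exp_neg_mul_rpow_neg hx) (fun x _ ↦ hasDerivAt_id x)
    (by simpa [Pi.mul_def] using integrableOn_one_sub_exp_neg_mul_rpow_neg hc.le hp) hu'v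
    (tendsto_one_sub_exp_neg_mul_rpow_neg_mul_nhdsGT_zero hc.le)
    (tendsto_one_sub_exp_neg_mul_rpow_neg_mul_atTop hc.le hp)
  simp only [mul_one, id] at hibp
  rw [hibp, setIntegral_congr_fun measurableSet_Ioi
      (fun x (hx : 0 < x) ↦ div_mul_cancel₀ _ hx.ne'), integral_const_mul,
    integral_rpow_neg_mul_exp_neg_mul_rpow_neg hc hp,
    rpow_sub hc, rpow_one]
  field_simp
  ring

end LaplaceExponent

section Radial

variable {g : ℝ → ℝ}

lemma integrableOn_Ioi_mul_comp_sq_iff :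
    IntegrableOn (fun y ↦ y * g (y ^ 2)) (Ioi 0) ↔ IntegrableOn g (Ioi 0) := by
  rw [← integrableOn_Ioi_comp_rpow_iff' g two_ne_zero]
  norm_num

lemma integral_Ioi_mul_comp_sq :
    ∫ y in Ioi 0, y * g (y ^ 2) = (∫ u in Ioi 0, g u) / 2 := by
  rw [← integral_comp_rpow_Ioi_of_pos (g := g) two_pos]
  norm_num [mul_assoc, integral_const_mul]

lemma Complex.integrable_comp_sq_norm_iff :
    Integrable (fun z : ℂ ↦ g (‖z‖ ^ 2)) ↔ IntegrableOn g (Ioi 0) := by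
  rw [integrable_fun_norm_addHaar volume (f := fun y ↦ g (y ^ 2)),
    ← integrableOn_Ioi_mul_comp_sq_iff (g := g)]
  simp

lemma Complex.integral_comp_sq_norm :
    ∫ z : ℂ, g (‖z‖ ^ 2) = π * ∫ u in Ioi 0, g u := by
  rw [integral_fun_norm_addHaar volume (fun y ↦ g (y ^ 2))]
  simp [integral_Ioi_mul_comp_sq, measureReal_def]
  ring

lemma sq_norm_measurableEquivRealProd_symm (p : ℝ × ℝ) :
    ‖Complex.measurableEquivRealProd.symm p‖ ^ 2 = p.1 ^ 2 + p.2 ^ 2 := by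
  rw [Complex.sq_norm, Complex.normSq_apply]
  simp [sq]

/- `ℂ` models the Euclidean plane here: on `ℝ × ℝ` the norm is the sup norm, so the radial
formulas `integrable_fun_norm_addHaar`, `integral_fun_norm_addHaar` only apply after transport. -/
lemma integrable_comp_sq_add_sq_iff :
    Integrable (fun p : ℝ × ℝ ↦ g (p.1 ^ 2 + p.2 ^ 2)) ↔ IntegrableOn g (Ioi 0) := by
  rw [← Complex.integrable_comp_sq_norm_iff,
    ← (Complex.volume_preserving_equiv_real_prod.symm).integrable_comp_emb
      Complex.measurableEquivRealProd.symm.measurableEmbedding]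
  simp_rw [Function.comp_def, sq_norm_measurableEquivRealProd_symm]

lemma integral_comp_sq_add_sq :
    ∫ p : ℝ × ℝ, g (p.1 ^ 2 + p.2 ^ 2) = π * ∫ u in Ioi 0, g u := by
  rw [← Complex.integral_comp_sq_norm,
    ← (Complex.volume_preserving_equiv_real_prod.symm).integral_comp
      Complex.measurableEquivRealProd.symm.measurableEmbedding]
  simp_rw [sq_norm_measurableEquivRealProd_symm]

lemma integral_Ioi_comp_sq (f : ℝ → ℝ) :
    ∫ t in Ioi 0, f (t ^ 2) = (∫ t, f (t ^ 2)) / 2 := by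
  have := integral_comp_abs (f := fun t ↦ f (t ^ 2))
  simp only [sq_abs] at this
  linarith

lemma integral_Ioi_Ioi_comp_sq_add_sq (hg : IntegrableOn g (Ioi 0)) :
    ∫ r in Ioi 0, ∫ t in Ioi 0, g (r ^ 2 + t ^ 2) = π / 4 * ∫ u in Ioi 0, g u := by
  have hinner (r : ℝ) : ∫ t in Ioi 0, g (r ^ 2 + t ^ 2) = (∫ t, g (r ^ 2 + t ^ 2)) / 2 :=
    integral_Ioi_comp_sq fun x ↦ g (r ^ 2 + x)
  simp_rw [hinner, integral_div, integral_Ioi_comp_sq fun x ↦ ∫ t, g (x + t ^ 2)]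
  rw [← integral_prod _ (integrable_comp_sq_add_sq_iff.2 hg), ← Measure.volume_eq_prod,
    integral_comp_sq_add_sq]
  ring

end Radial

/-- For all real `c > 0` and `α > 2`,
`∫₀^∞ ∫₀^∞ (1 - exp (-c (r² + t²)^(-α/2))) dt dr = (π/4) c^(2/α) Γ(1 - 2/α)`. -/
theorem stmt_5 (c α : ℝ) (hc : 0 < c) (hα : 2 < α) :
    ∫ r in Set.Ioi (0 : ℝ), ∫ t in Set.Ioi (0 : ℝ),
        (1 - Real.exp (-(c * (r ^ 2 + t ^ 2) ^ (-(α / 2))))) =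
      (π / 4) * c ^ (2 / α) * Real.Gamma (1 - 2 / α) := by
  have hp : 1 < α / 2 := by linarith
  rw [integral_Ioi_Ioi_comp_sq_add_sq (integrableOn_one_sub_exp_neg_mul_rpow_neg hc.le hp),
    integral_one_sub_exp_neg_mul_rpow_neg hc hp, one_div_div]
  ring
end

section
/- Let ζ be a nonnegative random variable on a probability space, let α > 2 and s > 0, and assume E[ζ^{2/α}] < ∞. Then ∫₀^∞ ∫₀^∞ E[1 − exp(−s ζ (r² + t²)^{−α/2})] dt dr = (π/4) Γ(1 − 2/α) s^{2/α} E[ζ^{2/α}], where Γ is the real Gamma function. -/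
/-!
Write `1 - e^{-a} = ∫₀^a e^{-u} du`. By the layer-cake formula the quadrant integral of
`1 - exp (-c (r² + t²)^{-α/2})` becomes `∫₀^∞ e^{-u} |{r, t > 0, r² + t² < (c/u)^{2/α}}| du`;
the level sets are quarter disks of area `(π/4) (c/u)^{2/α}`, leaving the Gamma integral
`c^{2/α} ∫₀^∞ e^{-u} u^{-2/α} du = c^{2/α} Γ(1 - 2/α)`, finite because `2/α < 1`.
With `c = s ζ`, Tonelli moves the expectation outside. All integrands are nonnegative, so the
iterated Bochner integrals agree with the Lebesgue integrals, whose finiteness comes out of the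
same computation.
-/

open MeasureTheory Real Set
open scoped ENNReal

theorem integral_sqrt_one_sub_sq_zero_one : ∫ x in (0:ℝ)..1, √(1 - x ^ 2) = π / 4 := by
  have h_even : ∫ x in (-1:ℝ)..0, √(1 - x ^ 2) = ∫ x in (0:ℝ)..1, √(1 - x ^ 2) := by
    have := intervalIntegral.integral_comp_neg (a := (0:ℝ)) (b := 1) (fun x => √(1 - x ^ 2))
    simp only [neg_sq, neg_zero] at this
    exact this.symm
  have h_cont : Continuous fun x : ℝ => √(1 - x ^ 2) := by fun_prop
  have := integral_sqrt_one_sub_sq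
  rw [← intervalIntegral.integral_add_adjacent_intervals (b := 0) (h_cont.intervalIntegrable _ _)
    (h_cont.intervalIntegrable _ _), h_even] at this
  linarith

theorem integral_sqrt_sq_sub_sq {R : ℝ} (hR : 0 ≤ R) :
    ∫ x in (0:ℝ)..R, √(R ^ 2 - x ^ 2) = π / 4 * R ^ 2 := by
  have h_scale : ∀ x : ℝ, √(R ^ 2 - (R * x) ^ 2) = R * √(1 - x ^ 2) := fun x => by
    rw [show R ^ 2 - (R * x) ^ 2 = R ^ 2 * (1 - x ^ 2) by ring, sqrt_mul (sq_nonneg R), sqrt_sq hR]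
  have := intervalIntegral.smul_integral_comp_mul_left (a := 0) (b := 1)
    (fun x => √(R ^ 2 - x ^ 2)) R
  simp only [h_scale, intervalIntegral.integral_const_mul, integral_sqrt_one_sub_sq_zero_one,
    mul_zero, mul_one, smul_eq_mul] at this
  rw [← this]; ring

theorem volume_quarter_disk (ρ : ℝ) :
    volume {p : ℝ × ℝ | 0 < p.1 ∧ 0 < p.2 ∧ p.1 ^ 2 + p.2 ^ 2 < ρ} =
      ENNReal.ofReal (π / 4 * ρ) := by
  rcases le_or_gt ρ 0 with hρ | hρ
  · have h_empty : {p : ℝ × ℝ | 0 < p.1 ∧ 0 < p.2 ∧ p.1 ^ 2 + p.2 ^ 2 < ρ} = ∅ :=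
      eq_empty_of_forall_notMem fun p ⟨_, _, hp⟩ => by nlinarith [sq_nonneg p.1, sq_nonneg p.2]
    rw [h_empty, measure_empty, ENNReal.ofReal_of_nonpos (by nlinarith [pi_pos])]
  have h_region : {p : ℝ × ℝ | 0 < p.1 ∧ 0 < p.2 ∧ p.1 ^ 2 + p.2 ^ 2 < ρ} =
      regionBetween 0 (fun x => √(ρ - x ^ 2)) (Ioo 0 √ρ) := by
    ext ⟨x, y⟩
    simp only [regionBetween, mem_ofPred_eq, mem_Ioo, Pi.zero_apply]
    constructor
    · rintro ⟨hx, hy, hxy⟩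
      exact ⟨⟨hx, lt_sqrt_of_sq_lt (by linarith [sq_nonneg y])⟩, hy,
        lt_sqrt_of_sq_lt (by linarith)⟩
    · rintro ⟨⟨hx, -⟩, hy, hyx⟩
      have := (lt_sqrt hy.le).mp hyx
      exact ⟨hx, hy, by linarith⟩
  have h_int : IntegrableOn (fun x => √(ρ - x ^ 2)) (Ioo 0 √ρ) :=
    (Continuous.integrableOn_Icc (by fun_prop)).mono_set Ioo_subset_Icc_self
  rw [h_region, Measure.volume_eq_prod, volume_regionBetween_eq_integral (f := 0)
    integrableOn_zero h_int measurableSet_Ioo (fun x _ => sqrt_nonneg _),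
    integral_Ioc_eq_integral_Ioo.symm,
    ← intervalIntegral.integral_of_le (sqrt_nonneg ρ)]
  simpa [sq_sqrt hρ.le] using congrArg ENNReal.ofReal (integral_sqrt_sq_sub_sq (sqrt_nonneg ρ))

theorem integral_exp_neg_from_zero (a : ℝ) : ∫ u in (0:ℝ)..a, exp (-u) = 1 - exp (-a) := by
  simp [intervalIntegral.integral_comp_neg (fun u => exp u)]

theorem ofReal_Gamma_eq_lintegral {s : ℝ} (hs : 0 < s) :
    ENNReal.ofReal (Gamma s) = ∫⁻ u in Ioi 0, ENNReal.ofReal (exp (-u) * u ^ (s - 1)) := by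
  rw [Gamma_eq_integral hs, ofReal_integral_eq_lintegral_ofReal (GammaIntegral_convergent hs)]
  filter_upwards [ae_restrict_mem measurableSet_Ioi] with u hu
  exact mul_nonneg (exp_pos _).le (rpow_nonneg hu.le _)

theorem lt_mul_rpow_neg_iff {u c x a : ℝ} (hu : 0 < u) (hc : 0 ≤ c) (hx : 0 < x) (ha : 0 < a) :
    u < c * x ^ (-a) ↔ x < (c / u) ^ a⁻¹ := by
  rw [rpow_neg hx.le, ← div_eq_mul_inv, lt_div_iff₀ (rpow_pos_of_pos hx a), ← lt_div_iff₀' hu,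
    lt_rpow_inv_iff_of_pos hx.le (div_nonneg hc hu.le) ha]

theorem one_sub_two_div_pos {α : ℝ} (hα : 2 < α) : 0 < 1 - 2 / α := by
  rw [sub_pos, div_lt_one (by linarith)]; exact hα

theorem lintegral_quadrant_one_sub_exp_neg {α c : ℝ} (hα : 2 < α) (hc : 0 ≤ c) :
    ∫⁻ p in Ioi 0 ×ˢ Ioi 0, ENNReal.ofReal (1 - exp (-(c * (p.1 ^ 2 + p.2 ^ 2) ^ (-(α / 2))))) =
      ENNReal.ofReal (π / 4 * Gamma (1 - 2 / α) * c ^ (2 / α)) := by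
  set f : ℝ × ℝ → ℝ := fun p => c * (p.1 ^ 2 + p.2 ^ 2) ^ (-(α / 2))
  have hα2 : 0 < α / 2 := by linarith
  have hf_nonneg : ∀ p, 0 ≤ f p := fun p => mul_nonneg hc (rpow_nonneg (by positivity) _)
  have h_level : ∀ u > 0, volume.restrict (Ioi 0 ×ˢ Ioi 0) {p | u < f p} =
      ENNReal.ofReal (π / 4 * (c / u) ^ (α / 2)⁻¹) := by
    intro u hu
    rw [Measure.restrict_apply' (measurableSet_Ioi.prod measurableSet_Ioi), ← volume_quarter_disk]
    congr 1
    ext p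
    simp only [mem_inter_iff, mem_ofPred_eq, mem_prod, mem_Ioi]
    constructor
    · rintro ⟨hup, hp1, hp2⟩
      exact ⟨hp1, hp2, (lt_mul_rpow_neg_iff hu hc (by positivity) hα2).mp hup⟩
    · rintro ⟨hp1, hp2, hp⟩
      exact ⟨(lt_mul_rpow_neg_iff hu hc (by positivity) hα2).mpr hp, hp1, hp2⟩
  calc ∫⁻ p in Ioi 0 ×ˢ Ioi 0, ENNReal.ofReal (1 - exp (-f p))
      = ∫⁻ p in Ioi 0 ×ˢ Ioi 0, ENNReal.ofReal (∫ u in (0:ℝ)..f p, exp (-u)) := by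
        simp only [integral_exp_neg_from_zero]
    _ = ∫⁻ u in Ioi 0, volume.restrict (Ioi 0 ×ˢ Ioi 0) {p | u < f p} *
          ENNReal.ofReal (exp (-u)) :=
        lintegral_comp_eq_lintegral_meas_lt_mul _ (.of_forall hf_nonneg) (by fun_prop)
          (fun _ _ => (by fun_prop : Continuous fun u => exp (-u)).intervalIntegrable _ _)
          (.of_forall fun _ => (exp_pos _).le)
    _ = ∫⁻ u in Ioi 0, ENNReal.ofReal (π / 4 * c ^ (2 / α)) *
          ENNReal.ofReal (exp (-u) * u ^ ((1 - 2 / α) - 1)) := by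
        refine setLIntegral_congr_fun measurableSet_Ioi fun u (hu : 0 < u) => ?_
        rw [h_level u hu, ← ENNReal.ofReal_mul (by positivity),
          ← ENNReal.ofReal_mul (by positivity)]
        congr 1
        rw [div_rpow hc hu.le, inv_div, show (1 - 2 / α) - 1 = -(2 / α) by ring,
          rpow_neg hu.le]
        ring
    _ = ENNReal.ofReal (π / 4 * Gamma (1 - 2 / α) * c ^ (2 / α)) := by
        rw [lintegral_const_mul _ (by fun_prop),
          ← ofReal_Gamma_eq_lintegral (one_sub_two_div_pos hα),
          ← ENNReal.ofReal_mul (by positivity)]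
        ring_nf

theorem integral_integral_toReal {α β : Type*} [MeasurableSpace α] [MeasurableSpace β]
    {μ : Measure α} {ν : Measure β} [SFinite ν] {F : α → β → ℝ≥0∞}
    (hF : Measurable (Function.uncurry F)) (h_fin : ∫⁻ x, ∫⁻ y, F x y ∂ν ∂μ ≠ ∞) :
    ∫ x, ∫ y, (F x y).toReal ∂ν ∂μ = (∫⁻ x, ∫⁻ y, F x y ∂ν ∂μ).toReal := by
  have h_meas : Measurable fun x => ∫⁻ y, F x y ∂ν := hF.lintegral_prod_right'
  have h_ae_fin := ae_lt_top h_meas h_fin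
  calc ∫ x, ∫ y, (F x y).toReal ∂ν ∂μ = ∫ x, (∫⁻ y, F x y ∂ν).toReal ∂μ :=
        integral_congr_ae <| h_ae_fin.mono fun x hx =>
          integral_toReal hF.of_uncurry_left.aemeasurable
            (ae_lt_top hF.of_uncurry_left hx.ne)
    _ = (∫⁻ x, ∫⁻ y, F x y ∂ν ∂μ).toReal := integral_toReal h_meas.aemeasurable h_ae_fin

theorem lintegral_quadrant_lintegral_one_sub_exp_neg {Ω : Type*} [MeasurableSpace Ω]
    {P : Measure Ω} [SFinite P] {ζ : Ω → ℝ} (hζmeas : Measurable ζ) (hζpos : ∀ ω, 0 ≤ ζ ω)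
    {α s : ℝ} (hα : 2 < α) (hs : 0 ≤ s) (hmom : Integrable (fun ω => ζ ω ^ (2 / α)) P) :
    ∫⁻ r in Ioi 0, ∫⁻ t in Ioi 0,
        ∫⁻ ω, ENNReal.ofReal (1 - exp (-(s * ζ ω * (r ^ 2 + t ^ 2) ^ (-(α / 2))))) ∂P =
      ENNReal.ofReal (π / 4 * Gamma (1 - 2 / α) * s ^ (2 / α) * ∫ ω, ζ ω ^ (2 / α) ∂P) := by
  set K := π / 4 * Gamma (1 - 2 / α) * s ^ (2 / α) with hK_def
  have hK : 0 ≤ K := by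
    have := Gamma_pos_of_pos (one_sub_two_div_pos hα)
    positivity
  set G : ℝ → ℝ → Ω → ℝ≥0∞ := fun r t ω =>
    ENNReal.ofReal (1 - exp (-(s * ζ ω * (r ^ 2 + t ^ 2) ^ (-(α / 2)))))
  have hG : Measurable fun q : (ℝ × ℝ) × Ω => G q.1.1 q.1.2 q.2 := by fun_prop
  calc ∫⁻ r in Ioi 0, ∫⁻ t in Ioi 0, ∫⁻ ω, G r t ω ∂P
      = ∫⁻ p in Ioi 0 ×ˢ Ioi 0, ∫⁻ ω, G p.1 p.2 ω ∂P :=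
        (setLIntegral_prod _ hG.lintegral_prod_right'.aemeasurable).symm
    _ = ∫⁻ ω, (∫⁻ p in Ioi 0 ×ˢ Ioi 0, G p.1 p.2 ω) ∂P :=
        lintegral_lintegral_swap hG.aemeasurable
    _ = ∫⁻ ω, ENNReal.ofReal K * ENNReal.ofReal (ζ ω ^ (2 / α)) ∂P := by
        refine lintegral_congr fun ω => ?_
        rw [lintegral_quadrant_one_sub_exp_neg hα (mul_nonneg hs (hζpos ω)),
          ← ENNReal.ofReal_mul hK, hK_def, mul_rpow hs (hζpos ω)]
        ring_nf
    _ = ENNReal.ofReal (K * ∫ ω, ζ ω ^ (2 / α) ∂P) := by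
        rw [lintegral_const_mul _ (by fun_prop), ENNReal.ofReal_mul hK,
          ofReal_integral_eq_lintegral_ofReal hmom (.of_forall fun ω => rpow_nonneg (hζpos ω) _)]

/-- Integrability claim in Lemma 2: for a nonnegative random variable `ζ`
with `E[ζ^(2/α)] < ∞`, `α > 2` and `s > 0`,
`∫₀^∞ ∫₀^∞ E[1 - exp (-s ζ (r² + t²)^(-α/2))] dt dr
  = (π/4) Γ(1 - 2/α) s^(2/α) E[ζ^(2/α)]`. -/
theorem stmt_6 {Ω : Type*} [MeasureSpace Ω] (P : Measure Ω) [IsProbabilityMeasure P]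
    (ζ : Ω → ℝ) (hζmeas : Measurable ζ) (hζpos : ∀ ω, 0 ≤ ζ ω)
    (α s : ℝ) (hα : 2 < α) (hs : 0 < s)
    (hmom : Integrable (fun ω => ζ ω ^ (2 / α)) P) :
    ∫ r in Set.Ioi (0 : ℝ), ∫ t in Set.Ioi (0 : ℝ),
        ∫ ω, (1 - Real.exp (-(s * ζ ω * (r ^ 2 + t ^ 2) ^ (-(α / 2))))) ∂P =
      (π / 4) * Real.Gamma (1 - 2 / α) * s ^ (2 / α) * ∫ ω, ζ ω ^ (2 / α) ∂P := by
  have h_inner : ∀ r t, ∫ ω, (1 - exp (-(s * ζ ω * (r ^ 2 + t ^ 2) ^ (-(α / 2))))) ∂P =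
      (∫⁻ ω, ENNReal.ofReal (1 - exp (-(s * ζ ω * (r ^ 2 + t ^ 2) ^ (-(α / 2))))) ∂P).toReal :=
    fun r t => integral_eq_lintegral_of_nonneg_ae
      (.of_forall fun ω => sub_nonneg.mpr <| exp_le_one_iff.mpr <| neg_nonpos.mpr <|
        mul_nonneg (mul_nonneg hs.le (hζpos ω)) (rpow_nonneg (by positivity) _))
      (by fun_prop)
  have h_lintegral :=
    lintegral_quadrant_lintegral_one_sub_exp_neg (P := P) hζmeas hζpos hα hs.le hmom
  have hΓ := Gamma_pos_of_pos (one_sub_two_div_pos hα)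
  have h_moment : 0 ≤ ∫ ω, ζ ω ^ (2 / α) ∂P := integral_nonneg fun ω => rpow_nonneg (hζpos ω) _
  simp only [h_inner]
  rw [integral_integral_toReal (by fun_prop) (h_lintegral ▸ ENNReal.ofReal_ne_top), h_lintegral,
    ENNReal.toReal_ofReal (by positivity)]
end

section
/- Let ζ be a nonnegative random variable with E[ζ^{2/α}] < ∞ for some α > 2, let s > 0 and c > 0, and define L(u) = E[exp(−uζ)] for u ≥ 0. Then the limit as λ → +∞ of exp(−2λ ∫₀^∞ (1 − exp(−(2c/λ) ∫₀^∞ (1 − L(s (r² + t²)^{−α/2})) dt)) dr) equals exp(−2πc ∫₀^∞ (1 − L(s ρ^{−α})) ρ dρ). -/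
/-!
Write `1 - L u = E[1 - exp (-u ζ)]` and let `I r = ∫₀^∞ (1 - L (s (r² + t²)^(-α/2))) dt`.
In polar coordinates the quarter plane gives `∫₀^∞ I = (π/2) ∫₀^∞ (1 - L (s ρ^(-α))) ρ dρ`,
which is finite because `∫₀^∞ (1 - exp (-a ρ^(-α))) ρ dρ = O(a^(2/α))` and `E[ζ^(2/α)] < ∞`.
Since `λ (1 - exp (-y/λ)) → y` and `0 ≤ λ (1 - exp (-y/λ)) ≤ y` for `y ≥ 0`, dominated convergence
gives `λ ∫₀^∞ (1 - exp (-2c I r / λ)) dr → 2c ∫₀^∞ I = π c ∫₀^∞ (1 - L (s ρ^(-α))) ρ dρ`.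
-/

open MeasureTheory Real Filter Set
open scoped ENNReal Topology

lemma one_sub_exp_neg_nonneg_s7 {x : ℝ} (hx : 0 ≤ x) : 0 ≤ 1 - exp (-x) := by
  rwa [sub_nonneg, exp_le_one_iff, neg_nonpos]

lemma lintegral_eq_two_mul_setLIntegral_Ioi_of_even {φ : ℝ → ℝ≥0∞} (he : ∀ x, φ (-x) = φ x) :
    ∫⁻ x, φ x = 2 * ∫⁻ x in Ioi 0, φ x := by
  have hneg : ∫⁻ x in Iio 0, φ x = ∫⁻ x in Ioi 0, φ x := by
    have := (Measure.measurePreserving_neg (volume : Measure ℝ)).setLIntegral_comp_preimage_emb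
      (Homeomorph.neg ℝ).measurableEmbedding φ (Ioi 0)
    simpa [he] using this
  rw [← lintegral_add_compl φ measurableSet_Ioi, compl_Ioi, setLIntegral_congr Iio_ae_eq_Iic.symm,
    hneg, two_mul]

lemma lintegral_Ioi_lintegral_Ioi_sq_add_sq {h : ℝ → ℝ≥0∞} (hh : Measurable h) :
    ∫⁻ x in Ioi 0, ∫⁻ y in Ioi 0, h (x ^ 2 + y ^ 2) =
      ENNReal.ofReal (π / 2) * ∫⁻ ρ in Ioi 0, h (ρ ^ 2) * ENNReal.ofReal ρ := by
  have hplane : ∫⁻ p : ℝ × ℝ, h (p.1 ^ 2 + p.2 ^ 2) =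
      4 * ∫⁻ x in Ioi 0, ∫⁻ y in Ioi 0, h (x ^ 2 + y ^ 2) := by
    rw [Measure.volume_eq_prod, lintegral_prod _ (by fun_prop)]
    have heven (x : ℝ) : ∫⁻ y, h (x ^ 2 + y ^ 2) = 2 * ∫⁻ y in Ioi 0, h (x ^ 2 + y ^ 2) :=
      lintegral_eq_two_mul_setLIntegral_Ioi_of_even fun y => by rw [neg_sq]
    simp_rw [heven]
    rw [lintegral_eq_two_mul_setLIntegral_Ioi_of_even (fun x => by simp only [neg_sq]),
      lintegral_const_mul _ (by fun_prop), ← mul_assoc]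
    norm_num
  have hpolar : ∫⁻ p : ℝ × ℝ, h (p.1 ^ 2 + p.2 ^ 2) =
      ENNReal.ofReal (2 * π) * ∫⁻ ρ in Ioi 0, h (ρ ^ 2) * ENNReal.ofReal ρ := by
    rw [← lintegral_comp_polarCoord_symm, polarCoord_target, Measure.volume_eq_prod,
      ← Measure.prod_restrict, lintegral_prod _ (by fun_prop)]
    have hsq (ρ θ : ℝ) : (ρ * cos θ) ^ 2 + (ρ * sin θ) ^ 2 = ρ ^ 2 := by
      rw [mul_pow, mul_pow, ← mul_add, cos_sq_add_sin_sq, mul_one]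
    simp only [polarCoord_symm_apply, hsq, smul_eq_mul, setLIntegral_const, Real.volume_Ioo,
      sub_neg_eq_add, ← two_mul]
    rw [lintegral_mul_const _ (by fun_prop), mul_comm]
    simp only [mul_comm (ENNReal.ofReal _)]
  have h4 : (4 : ℝ≥0∞) * ENNReal.ofReal (π / 2) = ENNReal.ofReal (2 * π) := by
    rw [show (4 : ℝ≥0∞) = ENNReal.ofReal 4 by norm_num, ← ENNReal.ofReal_mul (by norm_num)]
    ring_nf
  rw [← ENNReal.mul_right_inj (a := 4) (by norm_num) (by norm_num), ← hplane, hpolar,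
    ← mul_assoc, h4]

lemma integral_Ioi_integral_Ioi_sq_add_sq {h : ℝ → ℝ} (hm : Measurable h)
    (h0 : ∀ x, 0 ≤ x → 0 ≤ h x) (hi : IntegrableOn (fun ρ => h (ρ ^ 2) * ρ) (Ioi 0)) :
    IntegrableOn (fun x => ∫ y in Ioi 0, h (x ^ 2 + y ^ 2)) (Ioi 0) ∧
      ∫ x in Ioi 0, ∫ y in Ioi 0, h (x ^ 2 + y ^ 2) = π / 2 * ∫ ρ in Ioi 0, h (ρ ^ 2) * ρ := by
  set H : ℝ → ℝ≥0∞ := fun x => ∫⁻ y in Ioi 0, ENNReal.ofReal (h (x ^ 2 + y ^ 2))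
  have hH : Measurable H := by fun_prop
  have hsq_add_sq (x y : ℝ) : 0 ≤ h (x ^ 2 + y ^ 2) := h0 _ (by positivity)
  have hinner (x : ℝ) : ∫ y in Ioi 0, h (x ^ 2 + y ^ 2) = (H x).toReal :=
    integral_eq_lintegral_of_nonneg_ae (.of_forall fun y => hsq_add_sq x y)
      (hm.comp (by fun_prop)).aestronglyMeasurable
  have hprofile : 0 ≤ ∫ ρ in Ioi 0, h (ρ ^ 2) * ρ :=
    setIntegral_nonneg measurableSet_Ioi fun ρ hρ => mul_nonneg (h0 _ (sq_nonneg ρ)) (le_of_lt hρ)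
  have hQ : ∫⁻ x in Ioi 0, H x = ENNReal.ofReal (π / 2 * ∫ ρ in Ioi 0, h (ρ ^ 2) * ρ) := by
    refine (lintegral_Ioi_lintegral_Ioi_sq_add_sq (h := fun x => ENNReal.ofReal (h x))
      (by fun_prop)).trans ?_
    rw [ENNReal.ofReal_mul (by positivity), ofReal_integral_eq_lintegral_ofReal hi
        ((ae_restrict_iff' measurableSet_Ioi).2 (.of_forall fun ρ hρ =>
          mul_nonneg (h0 _ (sq_nonneg ρ)) (le_of_lt hρ)))]
    congr 1
    exact setLIntegral_congr_fun measurableSet_Ioi fun ρ _ =>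
      (ENNReal.ofReal_mul (h0 _ (sq_nonneg ρ))).symm
  have hQ_ne : ∫⁻ x in Ioi 0, H x ≠ ⊤ := hQ ▸ ENNReal.ofReal_ne_top
  simp_rw [hinner]
  refine ⟨integrable_toReal_of_lintegral_ne_top hH.aemeasurable hQ_ne, ?_⟩
  rw [integral_toReal hH.aemeasurable (ae_lt_top hH hQ_ne), hQ,
    ENNReal.toReal_ofReal (mul_nonneg (by positivity) hprofile)]

lemma lintegral_Ioc_ofReal_id {R : ℝ} (hR : 0 ≤ R) :
    ∫⁻ ρ in Ioc 0 R, ENNReal.ofReal ρ = ENNReal.ofReal (R ^ 2 / 2) := by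
  have hnn : 0 ≤ᵐ[volume.restrict (Ioc 0 R)] fun ρ : ℝ => ρ :=
    (ae_restrict_iff' measurableSet_Ioc).2 (.of_forall fun ρ hρ => hρ.1.le)
  rw [← ofReal_integral_eq_lintegral_ofReal continuous_id'.integrableOn_Ioc hnn,
    ← intervalIntegral.integral_of_le hR, integral_id]
  norm_num

lemma lintegral_Ioi_ofReal_rpow {R β : ℝ} (hR : 0 < R) (hβ : β < -1) :
    ∫⁻ ρ in Ioi R, ENNReal.ofReal (ρ ^ β) = ENNReal.ofReal (-R ^ (β + 1) / (β + 1)) := by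
  rw [← ofReal_integral_eq_lintegral_ofReal (integrableOn_Ioi_rpow_of_lt hβ hR)
      ((ae_restrict_iff' measurableSet_Ioi).2 (.of_forall fun ρ hρ =>
        rpow_nonneg (hR.trans hρ).le _)),
    integral_Ioi_rpow_of_lt hβ hR]

lemma lintegral_one_sub_exp_neg_mul_rpow_le {α a : ℝ} (hα : 2 < α) (ha : 0 ≤ a) :
    ∫⁻ ρ in Ioi 0, ENNReal.ofReal ((1 - exp (-(a * ρ ^ (-α)))) * ρ) ≤
      ENNReal.ofReal ((1 / 2 + 1 / (α - 2)) * a ^ (2 / α)) := by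
  rcases ha.eq_or_lt with rfl | ha
  · simp
  set R := a ^ (1 / α) with hR_def
  have hR : 0 < R := rpow_pos_of_pos ha _
  have hR2 : R ^ 2 = a ^ (2 / α) := by
    rw [← rpow_natCast, ← rpow_mul ha.le]; congr 1; push_cast; ring
  have haR : a * R ^ (2 - α) = a ^ (2 / α) := by
    have hα0 : α ≠ 0 := by linarith
    have hexp : 1 + 1 / α * (2 - α) = 2 / α := by field_simp; ring
    rw [← rpow_mul ha.le, ← rpow_one_add' ha.le (hexp ▸ div_ne_zero two_ne_zero hα0), hexp]
  -- split at `R`, the scale where `a * ρ ^ (-α) = 1`; use `1 - e^{-x} ≤ min 1 x` on each side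
  have hnear : ∫⁻ ρ in Ioc 0 R, ENNReal.ofReal ((1 - exp (-(a * ρ ^ (-α)))) * ρ) ≤
      ENNReal.ofReal (R ^ 2 / 2) := by
    rw [← lintegral_Ioc_ofReal_id hR.le]
    refine setLIntegral_mono (by fun_prop) fun ρ hρ => ENNReal.ofReal_le_ofReal ?_
    have : 0 < exp (-(a * ρ ^ (-α))) := exp_pos _
    nlinarith [hρ.1]
  have hfar : ∫⁻ ρ in Ioi R, ENNReal.ofReal ((1 - exp (-(a * ρ ^ (-α)))) * ρ) ≤
      ENNReal.ofReal (a * (R ^ (2 - α) / (α - 2))) := by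
    calc _ ≤ ∫⁻ ρ in Ioi R, ENNReal.ofReal a * ENNReal.ofReal (ρ ^ (1 - α)) := by
          refine setLIntegral_mono (by fun_prop) fun ρ hρ => ?_
          have hρ0 : 0 < ρ := hR.trans hρ
          rw [← ENNReal.ofReal_mul ha.le, rpow_sub hρ0, rpow_one, div_eq_mul_inv, ← rpow_neg hρ0.le]
          refine ENNReal.ofReal_le_ofReal ?_
          calc (1 - exp (-(a * ρ ^ (-α)))) * ρ ≤ a * ρ ^ (-α) * ρ := by
                gcongr; linarith [one_sub_le_exp_neg (a * ρ ^ (-α))]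
            _ = a * (ρ * ρ ^ (-α)) := by ring
      _ = ENNReal.ofReal (a * (R ^ (2 - α) / (α - 2))) := by
          rw [lintegral_const_mul _ (by fun_prop), lintegral_Ioi_ofReal_rpow hR (by linarith),
            ← ENNReal.ofReal_mul ha.le]
          congr 2
          rw [show 1 - α + 1 = -(α - 2) by ring, div_neg, neg_div, neg_neg]
          ring_nf
  rw [← Ioc_union_Ioi_eq_Ioi hR.le, lintegral_union measurableSet_Ioi (Ioc_disjoint_Ioi le_rfl)]
  refine (add_le_add hnear hfar).trans_eq ?_
  rw [← ENNReal.ofReal_add (by positivity) (by have := rpow_pos_of_pos hR (2 - α); positivity),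
    ← mul_div_assoc, haR, hR2]
  ring_nf

section LaplaceTransform

variable {Ω : Type*} [MeasurableSpace Ω] {P : Measure Ω} {ζ : Ω → ℝ}

lemma integrable_one_sub_exp_neg_mul [IsFiniteMeasure P] (hζm : Measurable ζ)
    (hζ0 : ∀ ω, 0 ≤ ζ ω) {u : ℝ} (hu : 0 ≤ u) :
    Integrable (fun ω => 1 - exp (-(u * ζ ω))) P := by
  refine .of_bound (by fun_prop) 1 (.of_forall fun ω => ?_)
  have hx : 0 ≤ u * ζ ω := mul_nonneg hu (hζ0 ω)
  rw [norm_of_nonneg (one_sub_exp_neg_nonneg_s7 hx)]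
  linarith [exp_pos (-(u * ζ ω))]

lemma integral_one_sub_exp_neg_mul_nonneg (hζ0 : ∀ ω, 0 ≤ ζ ω) {u : ℝ} (hu : 0 ≤ u) :
    0 ≤ ∫ ω, (1 - exp (-(u * ζ ω))) ∂P :=
  integral_nonneg fun ω => one_sub_exp_neg_nonneg_s7 (mul_nonneg hu (hζ0 ω))

lemma measurable_integral_one_sub_exp_neg_mul [SFinite P] (hζm : Measurable ζ) :
    Measurable fun u => ∫ ω, (1 - exp (-(u * ζ ω))) ∂P :=
  (StronglyMeasurable.integral_prod_right' (f := fun p : ℝ × Ω => 1 - exp (-(p.1 * ζ p.2)))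
    (by fun_prop)).measurable

lemma one_sub_integral_exp_neg_mul [IsProbabilityMeasure P] (hζm : Measurable ζ)
    (hζ0 : ∀ ω, 0 ≤ ζ ω) {u : ℝ} (hu : 0 ≤ u) :
    1 - ∫ ω, exp (-(u * ζ ω)) ∂P = ∫ ω, (1 - exp (-(u * ζ ω))) ∂P := by
  have hexp : Integrable (fun ω => exp (-(u * ζ ω))) P := by
    refine ((integrable_const 1).sub (integrable_one_sub_exp_neg_mul hζm hζ0 hu)).congr ?_
    exact .of_forall fun ω => by simp
  rw [integral_sub (integrable_const 1) hexp, integral_const, probReal_univ, one_smul]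

lemma integrableOn_integral_one_sub_exp_neg_mul_rpow_mul [IsFiniteMeasure P] (hζm : Measurable ζ)
    (hζ0 : ∀ ω, 0 ≤ ζ ω) {α : ℝ} (hα : 2 < α) (hmom : Integrable (fun ω => ζ ω ^ (2 / α)) P)
    {a : ℝ} (ha : 0 ≤ a) :
    IntegrableOn (fun ρ => (∫ ω, (1 - exp (-(a * ρ ^ (-α) * ζ ω))) ∂P) * ρ) (Ioi 0) := by
  have hu {ρ : ℝ} (hρ : 0 < ρ) : 0 ≤ a * ρ ^ (-α) := by positivity
  have hprofile : EqOn (fun ρ => ENNReal.ofReal ((∫ ω, (1 - exp (-(a * ρ ^ (-α) * ζ ω))) ∂P) * ρ))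
      (fun ρ => ∫⁻ ω, ENNReal.ofReal ((1 - exp (-(a * ρ ^ (-α) * ζ ω))) * ρ) ∂P) (Ioi 0) :=
    fun ρ (hρ : 0 < ρ) => by
      dsimp only
      rw [← integral_mul_const, ofReal_integral_eq_lintegral_ofReal
        ((integrable_one_sub_exp_neg_mul hζm hζ0 (hu hρ)).mul_const ρ)
        (.of_forall fun ω =>
          mul_nonneg (one_sub_exp_neg_nonneg_s7 (mul_nonneg (hu hρ) (hζ0 ω))) hρ.le)]
  have hmoment : ∫⁻ ω, ENNReal.ofReal ((1 / 2 + 1 / (α - 2)) * (a * ζ ω) ^ (2 / α)) ∂P < ⊤ := by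
    refine Integrable.lintegral_lt_top ?_
    simp_rw [mul_rpow ha (hζ0 _), ← mul_assoc]
    exact hmom.const_mul _
  refine (lintegral_ofReal_ne_top_iff_integrable ?_ ?_).1 (ne_of_lt ?_)
  · exact ((measurable_integral_one_sub_exp_neg_mul hζm).comp (by fun_prop)).mul
      measurable_id |>.aestronglyMeasurable
  · exact (ae_restrict_iff' measurableSet_Ioi).2 (.of_forall fun ρ (hρ : 0 < ρ) =>
      mul_nonneg (integral_one_sub_exp_neg_mul_nonneg hζ0 (hu hρ)) hρ.le)
  calc _ = ∫⁻ ρ in Ioi 0, ∫⁻ ω, ENNReal.ofReal ((1 - exp (-(a * ρ ^ (-α) * ζ ω))) * ρ) ∂P :=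
        setLIntegral_congr_fun measurableSet_Ioi hprofile
    _ = ∫⁻ ω, (∫⁻ ρ in Ioi 0, ENNReal.ofReal ((1 - exp (-(a * ζ ω * ρ ^ (-α)))) * ρ)) ∂P := by
        rw [lintegral_lintegral_swap (by fun_prop)]
        simp only [mul_right_comm a]
    _ ≤ _ := lintegral_mono fun ω =>
        lintegral_one_sub_exp_neg_mul_rpow_le hα (mul_nonneg ha (hζ0 ω))
    _ < ⊤ := hmoment

end LaplaceTransform

lemma tendsto_mul_one_sub_exp_neg_div (y : ℝ) :
    Tendsto (fun l : ℝ => l * (1 - exp (-(y / l)))) atTop (𝓝 y) := by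
  rcases eq_or_ne y 0 with rfl | hy
  · simp
  have hslope := hasDerivAt_iff_tendsto_slope_zero.1 (hasDerivAt_exp 0)
  have ht : Tendsto (fun l : ℝ => -(y / l)) atTop (𝓝[≠] 0) := by
    refine tendsto_nhdsWithin_of_tendsto_nhds_of_eventually_within _ ?_ ?_
    · simpa using (tendsto_const_nhds (x := y).div_atTop tendsto_id).neg
    · filter_upwards [eventually_gt_atTop 0] with l hl
      simpa using div_ne_zero hy hl.ne'
  refine ((hslope.comp ht).const_mul y).congr' ?_ |>.trans (by simp)
  filter_upwards [eventually_gt_atTop 0] with l hl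
  simp only [Function.comp_apply, zero_add, exp_zero, smul_eq_mul]
  field_simp
  ring

lemma tendsto_mul_integral_one_sub_exp_neg {X : Type*} [MeasurableSpace X] {μ : Measure X}
    {f : X → ℝ} (hf : Integrable f μ) (hf0 : 0 ≤ᵐ[μ] f) {b : ℝ} (hb : 0 ≤ b) :
    Tendsto (fun l : ℝ => l * ∫ x, (1 - exp (-(b / l * f x))) ∂μ) atTop
      (𝓝 (b * ∫ x, f x ∂μ)) := by
  simp_rw [← integral_const_mul]
  refine tendsto_integral_filter_of_dominated_convergence (fun x => b * f x)
    (.of_forall fun l => by fun_prop) ?_ (hf.const_mul b) ?_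
  · filter_upwards [eventually_gt_atTop 0] with l hl
    filter_upwards [hf0] with x hx
    have harg : 0 ≤ b / l * f x := mul_nonneg (div_nonneg hb hl.le) hx
    rw [norm_of_nonneg (mul_nonneg hl.le (one_sub_exp_neg_nonneg_s7 harg))]
    calc l * (1 - exp (-(b / l * f x))) ≤ l * (b / l * f x) := by
          gcongr; linarith [one_sub_le_exp_neg (b / l * f x)]
      _ = b * f x := by field_simp
  · refine .of_forall fun x => ?_
    simpa [div_mul_eq_mul_div] using tendsto_mul_one_sub_exp_neg_div (b * f x)

/-- Lemma 2, equation (7): as the road intensity `λ → ∞` with `λ u_b = c` fixed,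
the Laplace transform of the vehicular interference converges to that of a 2D
Poisson point process of intensity `c`. -/
theorem stmt_7 {Ω : Type*} [MeasureSpace Ω] (P : Measure Ω) [IsProbabilityMeasure P]
    (ζ : Ω → ℝ) (hζmeas : Measurable ζ) (hζpos : ∀ ω, 0 ≤ ζ ω)
    (α : ℝ) (hα : 2 < α)
    (hmom : Integrable (fun ω => ζ ω ^ (2 / α)) P)
    (s c : ℝ) (hs : 0 < s) (hc : 0 < c)
    (L : ℝ → ℝ) (hL : ∀ u, 0 ≤ u → L u = ∫ ω, Real.exp (-(u * ζ ω)) ∂P) :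
    Tendsto
      (fun l : ℝ => Real.exp (-(2 * l *
        ∫ r in Set.Ioi (0 : ℝ),
          (1 - Real.exp (-((2 * c / l) *
            ∫ t in Set.Ioi (0 : ℝ),
              (1 - L (s * (r ^ 2 + t ^ 2) ^ (-(α / 2))))))))))
      atTop
      (nhds (Real.exp (-(2 * π * c *
        ∫ ρ in Set.Ioi (0 : ℝ), (1 - L (s * ρ ^ (-α))) * ρ)))) := by
  set G : ℝ → ℝ := fun u => ∫ ω, (1 - exp (-(u * ζ ω))) ∂P
  have hLG {u : ℝ} (hu : 0 ≤ u) : 1 - L u = G u := by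
    rw [hL u hu]; exact one_sub_integral_exp_neg_mul hζmeas hζpos hu
  set h : ℝ → ℝ := fun x => G (s * x ^ (-(α / 2)))
  have h0 (x : ℝ) (hx : 0 ≤ x) : 0 ≤ h x :=
    integral_one_sub_exp_neg_mul_nonneg hζpos (by positivity)
  have hsq {ρ : ℝ} (hρ : 0 < ρ) : h (ρ ^ 2) = G (s * ρ ^ (-α)) := by
    simp only [h, ← rpow_natCast_mul hρ.le]
    congr 3; push_cast; ring
  have hint : IntegrableOn (fun ρ => h (ρ ^ 2) * ρ) (Ioi 0) :=
    (integrableOn_integral_one_sub_exp_neg_mul_rpow_mul hζmeas hζpos hα hmom hs.le).congr_fun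
      (fun ρ hρ => by rw [hsq hρ]) measurableSet_Ioi
  obtain ⟨hIint, hIeq⟩ := integral_Ioi_integral_Ioi_sq_add_sq (h := h)
    ((measurable_integral_one_sub_exp_neg_mul hζmeas).comp (by fun_prop)) h0 hint
  have hlim := tendsto_mul_integral_one_sub_exp_neg hIint
    ((ae_restrict_iff' measurableSet_Ioi).2 (.of_forall fun r _ =>
      setIntegral_nonneg measurableSet_Ioi fun t _ => h0 _ (by positivity)))
    (by positivity : 0 ≤ 2 * c)
  have hinner (r t : ℝ) : 1 - L (s * (r ^ 2 + t ^ 2) ^ (-(α / 2))) = h (r ^ 2 + t ^ 2) :=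
    hLG (by positivity)
  have hradial : ∫ ρ in Ioi 0, (1 - L (s * ρ ^ (-α))) * ρ = ∫ ρ in Ioi 0, h (ρ ^ 2) * ρ :=
    setIntegral_congr_fun measurableSet_Ioi fun ρ (hρ : 0 < ρ) => by
      rw [hsq hρ, hLG (by positivity)]
  simp only [hinner, hradial]
  convert (continuous_exp.tendsto _).comp (hlim.const_mul 2).neg using 2
  · simp only [Function.comp_apply, mul_assoc]
  · rw [hIeq]; congr 2; ring
end

section
/- Let N be a positive integer, κ = (N!)^{−1/N}, and let G be gamma distributed with shape N and rate 1. Then for every y ≥ 0, Pr(G ≤ y) ≥ (1 − exp(−κy))^N. -/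
/-!
Let `A` be the gamma(N, 1) density and `B` the derivative of `H x = (1 - e^{-κx})^N`. Because
`N! κ^N = 1`, `A / B = td(κx)^(N-1) e^{(κ-1)x}` with `td u = u / (1 - e^{-u})` the Todd function.
Since `log td` is concave on `[0, ∞)` and vanishes at `0`, so does `log (A / B)`; hence `A ≥ B` on
an initial segment of `(0, ∞)` and `A ≤ B` after it. Thus `F - H`, with `F` the cdf, first increases
and then decreases, and since it vanishes at `0` and at `∞` it is nonnegative.
-/

open MeasureTheory ProbabilityTheory Real Set Filter Topology
open scoped Nat

noncomputable section

/-- `todd 0 = 0 / 0 = 0`, so `log (todd 0) = 0` is also the limit of `log ∘ todd` at `0⁺`. -/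
def todd (u : ℝ) : ℝ := u / (1 - exp (-u))

lemma one_sub_exp_neg_pos {u : ℝ} (hu : 0 < u) : 0 < 1 - exp (-u) := by
  simpa using exp_lt_one_iff.mpr (neg_neg_of_pos hu)

lemma tendsto_todd_nhdsGT_zero : Tendsto todd (𝓝[>] 0) (𝓝 1) := by
  have hslope : Tendsto (fun u => (1 - exp (-u)) / u) (𝓝[>] 0) (𝓝 1) := by
    have h := ((hasDerivAt_neg 0).exp.const_sub 1).tendsto_slope_zero_right
    simpa [div_eq_inv_mul] using h
  show Tendsto (fun u => u / (1 - exp (-u))) _ _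
  simpa using hslope.inv₀ one_ne_zero

lemma hasDerivAt_log_todd {u : ℝ} (hu : 0 < u) :
    HasDerivAt (fun v => log (todd v)) (u⁻¹ - (exp u - 1)⁻¹) u := by
  have hpos := one_sub_exp_neg_pos hu
  have h := ((hasDerivAt_id u).div ((hasDerivAt_neg u).exp.const_sub 1) hpos.ne').log
    (div_pos hu hpos).ne'
  refine h.congr_deriv ?_
  have hE : exp u - 1 ≠ 0 := by linarith [add_one_lt_exp hu.ne']
  have hexp : exp (-u) * exp u = 1 := by rw [← exp_add]; simp
  simp only [Pi.div_apply, id]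
  field_simp
  linear_combination -u * hexp

lemma hasDerivAt_inv_sub_inv_exp_sub_one {u : ℝ} (hu : 0 < u) :
    HasDerivAt (fun v => v⁻¹ - (exp v - 1)⁻¹) (-(u ^ 2)⁻¹ - -exp u / (exp u - 1) ^ 2) u := by
  have hE : exp u - 1 ≠ 0 := by linarith [add_one_lt_exp hu.ne']
  exact (hasDerivAt_inv hu.ne').fun_sub (((hasDerivAt_exp u).sub_const 1).fun_inv hE)

lemma sq_mul_exp_le_sq_exp_sub_one {u : ℝ} (hu : 0 ≤ u) : u ^ 2 * exp u ≤ (exp u - 1) ^ 2 := by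
  have hsinh : u / 2 ≤ sinh (u / 2) := self_le_sinh_iff.mpr (by positivity)
  have hsq : exp u = exp (u / 2) ^ 2 := by rw [← exp_nat_mul]; ring_nf
  have hinv : exp (-(u / 2)) * exp (u / 2) = 1 := by rw [← exp_add]; simp
  have key : u * exp (u / 2) ≤ exp u - 1 := by
    rw [sinh_eq] at hsinh; nlinarith [exp_pos (u / 2)]
  calc u ^ 2 * exp u = (u * exp (u / 2)) ^ 2 := by rw [hsq]; ring
    _ ≤ (exp u - 1) ^ 2 := pow_le_pow_left₀ (by positivity) key 2

lemma concaveOn_log_todd : ConcaveOn ℝ (Ici 0) (fun u => log (todd u)) := by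
  refine concaveOn_of_hasDerivWithinAt2_nonpos (convex_Ici 0) ?_ ?_ ?_ ?_
    (f' := fun u => u⁻¹ - (exp u - 1)⁻¹) (f'' := fun u => -(u ^ 2)⁻¹ - -exp u / (exp u - 1) ^ 2)
  · intro u hu
    rcases (mem_Ici.mp hu).eq_or_lt with hu | hu
    · subst hu
      refine continuousWithinAt_Ioi_iff_Ici.mp ?_
      have h := ((continuousAt_log one_ne_zero).tendsto.comp tendsto_todd_nhdsGT_zero)
      simpa [ContinuousWithinAt, todd, Function.comp_def] using h
    · exact (hasDerivAt_log_todd hu).continuousAt.continuousWithinAt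
  all_goals rw [interior_Ici]; intro u (hu : 0 < u)
  · exact (hasDerivAt_log_todd hu).hasDerivWithinAt
  · exact (hasDerivAt_inv_sub_inv_exp_sub_one hu).hasDerivWithinAt
  · have hE : 0 < exp u - 1 := by linarith [add_one_lt_exp hu.ne']
    have key := sq_mul_exp_le_sq_exp_sub_one hu.le
    have : exp u / (exp u - 1) ^ 2 ≤ (u ^ 2)⁻¹ := by
      rw [div_le_iff₀ (by positivity), inv_mul_eq_div, le_div_iff₀ (by positivity)]
      linarith
    simp only [neg_div, sub_neg_eq_add]
    linarith

/-- `log` of `erlangPDF N x` divided by the derivative of `(1 - exp (-(κ * x))) ^ N`,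
when `N! κ^N = 1`. -/
def logDensityRatio (N : ℕ) (κ x : ℝ) : ℝ := (N - 1 : ℕ) * log (todd (κ * x)) + (κ - 1) * x

lemma concaveOn_logDensityRatio (N : ℕ) {κ : ℝ} (hκ : 0 ≤ κ) :
    ConcaveOn ℝ (Ici 0) (logDensityRatio N κ) := by
  have hscaled : ConcaveOn ℝ (Ici 0) (fun x => log (todd (κ * x))) := by
    refine (concaveOn_log_todd.comp_linearMap (LinearMap.lsmul ℝ ℝ κ)).subset ?_ (convex_Ici 0)
    intro x (hx : 0 ≤ x)
    simpa using mul_nonneg hκ hx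
  exact (hscaled.smul (Nat.cast_nonneg (N - 1))).add
    ((LinearMap.lsmul ℝ ℝ (κ - 1)).concaveOn (convex_Ici 0))

lemma logDensityRatio_zero (N : ℕ) (κ : ℝ) : logDensityRatio N κ 0 = 0 := by
  simp [logDensityRatio, todd]

lemma logDensityRatio_nonneg_of_le {N : ℕ} {κ b z : ℝ} (hκ : 0 ≤ κ) (hb : 0 ≤ b) (hbz : b ≤ z)
    (hz : 0 ≤ logDensityRatio N κ z) : 0 ≤ logDensityRatio N κ b := by
  have h := (concaveOn_logDensityRatio N hκ).ge_on_segment (mem_Ici.mpr le_rfl)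
    (mem_Ici.mpr (hb.trans hbz)) (by rw [segment_eq_Icc (hb.trans hbz)]; exact ⟨hb, hbz⟩)
  rw [logDensityRatio_zero] at h
  exact (le_min le_rfl hz).trans h

def erlangPDF (N : ℕ) (x : ℝ) : ℝ := x ^ (N - 1) * exp (-x) / (N - 1)!

lemma continuous_erlangPDF (N : ℕ) : Continuous (erlangPDF N) := by
  unfold erlangPDF; fun_prop

lemma gammaPDFReal_natCast_one {N : ℕ} (hN : 0 < N) {x : ℝ} (hx : 0 ≤ x) :
    gammaPDFReal N 1 x = erlangPDF N x := by
  obtain ⟨n, rfl⟩ : ∃ n, N = n + 1 := ⟨N - 1, by omega⟩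
  rw [gammaPDFReal, if_pos hx, erlangPDF]
  push_cast
  rw [Gamma_nat_eq_factorial, add_sub_cancel_right, rpow_natCast]
  simp only [one_rpow, one_mul]
  ring

lemma cdf_gammaMeasure_natCast_one {N : ℕ} (hN : 0 < N) {x : ℝ} (hx : 0 ≤ x) :
    cdf (gammaMeasure N 1) x = ∫ t in 0..x, erlangPDF N t := by
  rw [cdf_gammaMeasure_eq_integral (by exact_mod_cast hN) one_pos,
    setIntegral_eq_of_subset_of_forall_sdiff_eq_zero measurableSet_Iic Icc_subset_Iic_self,
    integral_Icc_eq_integral_Ioc, ← intervalIntegral.integral_of_le hx]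
  · refine intervalIntegral.integral_congr fun t ht => ?_
    rw [uIcc_of_le hx] at ht
    exact gammaPDFReal_natCast_one hN ht.1
  · intro t ⟨htx, ht⟩
    rw [gammaPDFReal, if_neg fun h => ht ⟨h, htx⟩]

lemma tendsto_integral_erlangPDF_atTop {N : ℕ} (hN : 0 < N) :
    Tendsto (fun x => ∫ t in 0..x, erlangPDF N t) atTop (𝓝 1) := by
  have : IsProbabilityMeasure (gammaMeasure N 1) :=
    isProbabilityMeasure_gammaMeasure (by exact_mod_cast hN) one_pos
  refine (tendsto_cdf_atTop (μ := gammaMeasure N 1)).congr' ?_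
  filter_upwards [eventually_ge_atTop 0] with x hx
  exact cdf_gammaMeasure_natCast_one hN hx

lemma hasDerivAt_one_sub_exp_neg_mul_pow (N : ℕ) (κ x : ℝ) :
    HasDerivAt (fun x => (1 - exp (-(κ * x))) ^ N)
      (N * (1 - exp (-(κ * x))) ^ (N - 1) * (κ * exp (-(κ * x)))) x := by
  have h := ((((hasDerivAt_id x).const_mul κ).fun_neg.exp.const_sub 1).fun_pow N)
  exact h.congr_deriv (by simp only [id, mul_one]; ring)

lemma tendsto_one_sub_exp_neg_mul_pow_atTop (N : ℕ) {κ : ℝ} (hκ : 0 < κ) :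
    Tendsto (fun x => (1 - exp (-(κ * x))) ^ N) atTop (𝓝 1) := by
  have h : Tendsto (fun x => exp (-(κ * x))) atTop (𝓝 0) :=
    tendsto_exp_atBot.comp (tendsto_neg_atTop_atBot.comp (tendsto_id.const_mul_atTop hκ))
  simpa using (h.const_sub 1).pow N

lemma erlangPDF_eq_mul_exp_logDensityRatio {N : ℕ} (hN : 0 < N) {κ x : ℝ} (hκ : 0 < κ)
    (hκN : (N ! : ℝ) * κ ^ N = 1) (hx : 0 < x) :
    erlangPDF N x = N * (1 - exp (-(κ * x))) ^ (N - 1) * (κ * exp (-(κ * x))) *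
      exp (logDensityRatio N κ x) := by
  obtain ⟨n, rfl⟩ : ∃ n, N = n + 1 := ⟨N - 1, by omega⟩
  have hpos := one_sub_exp_neg_pos (mul_pos hκ hx)
  have htodd : 0 < todd (κ * x) := div_pos (mul_pos hκ hx) hpos
  have hexp : exp (-(κ * x)) * exp ((κ - 1) * x) = exp (-x) := by rw [← exp_add]; ring_nf
  rw [logDensityRatio, exp_add, Nat.add_sub_cancel, exp_nat_mul, exp_log htodd, todd, erlangPDF,
    Nat.add_sub_cancel]
  rw [Nat.factorial_succ] at hκN
  push_cast at hκN
  rw [div_pow, ← hexp]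
  field_simp
  push_cast
  linear_combination (-x ^ n) * hκN

lemma erlangPDF_sub_nonneg_iff {N : ℕ} (hN : 0 < N) {κ x : ℝ} (hκ : 0 < κ)
    (hκN : (N ! : ℝ) * κ ^ N = 1) (hx : 0 < x) :
    0 ≤ erlangPDF N x - N * (1 - exp (-(κ * x))) ^ (N - 1) * (κ * exp (-(κ * x))) ↔
      0 ≤ logDensityRatio N κ x := by
  have hpos : 0 < N * (1 - exp (-(κ * x))) ^ (N - 1) * (κ * exp (-(κ * x))) := by
    have := one_sub_exp_neg_pos (mul_pos hκ hx)
    have : (0 : ℝ) < N := by exact_mod_cast hN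
    positivity
  rw [erlangPDF_eq_mul_exp_logDensityRatio hN hκ hκN hx, ← mul_sub_one,
    mul_nonneg_iff_of_pos_left hpos, sub_nonneg, one_le_exp_iff]

theorem nonneg_of_deriv_sign_change {g g' : ℝ → ℝ} (hg : ContinuousOn g (Ici 0))
    (hderiv : ∀ x > 0, HasDerivAt g (g' x) x) (hg0 : g 0 = 0)
    (hlim : Tendsto g atTop (𝓝 0))
    (hsign : ∀ b z, 0 < b → b ≤ z → 0 ≤ g' z → 0 ≤ g' b) {y : ℝ} (hy : 0 ≤ y) : 0 ≤ g y := by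
  by_cases hincr : ∃ z, y ≤ z ∧ 0 ≤ g' z
  · obtain ⟨z, hyz, hz⟩ := hincr
    have hmono : MonotoneOn g (Icc 0 y) := by
      refine monotoneOn_of_hasDerivWithinAt_nonneg (convex_Icc 0 y) (hg.mono Icc_subset_Ici_self)
        (fun x hx => (hderiv x ?_).hasDerivWithinAt) fun x hx => hsign x z ?_ ?_ hz
      all_goals rw [interior_Icc] at hx
      exacts [hx.1, hx.1, hx.2.le.trans hyz]
    simpa [hg0] using hmono ⟨le_rfl, hy⟩ ⟨hy, le_rfl⟩ hy
  · push Not at hincr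
    have hanti : AntitoneOn g (Ici y) := by
      refine antitoneOn_of_hasDerivWithinAt_nonpos (convex_Ici y) (hg.mono (Ici_subset_Ici.mpr hy))
        (fun x hx => (hderiv x ?_).hasDerivWithinAt) fun x hx => (hincr x ?_).le
      all_goals rw [interior_Ici] at hx
      exacts [hy.trans_lt hx, hx.le]
    refine le_of_tendsto hlim ?_
    filter_upwards [eventually_ge_atTop y] with z hz
    exact hanti self_mem_Ici hz hz

theorem one_sub_exp_neg_mul_pow_le_integral_erlangPDF {N : ℕ} (hN : 0 < N) {κ : ℝ} (hκ : 0 < κ)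
    (hκN : (N ! : ℝ) * κ ^ N = 1) {y : ℝ} (hy : 0 ≤ y) :
    (1 - exp (-(κ * y))) ^ N ≤ ∫ t in 0..y, erlangPDF N t := by
  have hderiv : ∀ x, HasDerivAt (fun x => (∫ t in 0..x, erlangPDF N t) - (1 - exp (-(κ * x))) ^ N)
      (erlangPDF N x - N * (1 - exp (-(κ * x))) ^ (N - 1) * (κ * exp (-(κ * x)))) x := fun x =>
    ((continuous_erlangPDF N).integral_hasStrictDerivAt 0 x).hasDerivAt.sub
      (hasDerivAt_one_sub_exp_neg_mul_pow N κ x)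
  refine sub_nonneg.mp (nonneg_of_deriv_sign_change
    (fun x _ => (hderiv x).continuousAt.continuousWithinAt) (fun x _ => hderiv x) ?_ ?_ ?_ hy)
  · simp [hN.ne']
  · simpa using
      (tendsto_integral_erlangPDF_atTop hN).sub (tendsto_one_sub_exp_neg_mul_pow_atTop N hκ)
  · intro b z hb hbz hz
    rw [erlangPDF_sub_nonneg_iff hN hκ hκN hb]
    rw [erlangPDF_sub_nonneg_iff hN hκ hκN (hb.trans_le hbz)] at hz
    exact logDensityRatio_nonneg_of_le hκ.le hb.le hbz hz

end

/-- Alzer-type lower bound on the gamma cdf: for `G ∼ gamma(N, 1)` and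
`κ = (N!)^(-1/N)`, `Pr(G ≤ y) ≥ (1 - exp (-κ y))^N` for every `y ≥ 0`. -/
theorem stmt_13 {Ω : Type*} [MeasureSpace Ω] (P : Measure Ω) [IsProbabilityMeasure P]
    (N : ℕ) (hN : 0 < N) (G : Ω → ℝ) (hGmeas : Measurable G)
    (hG : Measure.map G P = gammaMeasure (N : ℝ) 1)
    (κ : ℝ) (hκ : κ = ((N.factorial : ℝ)) ^ (-(1 / (N : ℝ))))
    (y : ℝ) (hy : 0 ≤ y) :
    ENNReal.ofReal ((1 - Real.exp (-(κ * y))) ^ N) ≤ P {ω | G ω ≤ y} := by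
  have hfac : (0 : ℝ) < N ! := by exact_mod_cast N.factorial_pos
  have hκpos : 0 < κ := hκ ▸ rpow_pos_of_pos hfac _
  have hκN : (N ! : ℝ) * κ ^ N = 1 := by
    rw [hκ, ← rpow_natCast, ← rpow_mul hfac.le, neg_mul, one_div,
      inv_mul_cancel₀ (by exact_mod_cast hN.ne'), rpow_neg_one, mul_inv_cancel₀ hfac.ne']
  have : IsProbabilityMeasure (gammaMeasure N 1) :=
    isProbabilityMeasure_gammaMeasure (by exact_mod_cast hN) one_pos
  change _ ≤ P (G ⁻¹' Iic y)
  rw [← Measure.map_apply hGmeas measurableSet_Iic, hG, ← ofReal_cdf,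
    cdf_gammaMeasure_natCast_one hN hy]
  exact ENNReal.ofReal_le_ofReal (one_sub_exp_neg_mul_pow_le_integral_erlangPDF hN hκpos hκN hy)
end

section
/- For all real numbers c > 0 and τ > 0, the limit as n → +∞ of 2n ∫₀^τ (1 − exp(−(2c/n) √(τ² − r²))) dr equals cπτ². -/
open Filter Real intervalIntegral

lemma half_sqrt : ∫ x in (0:ℝ)..1, Real.sqrt (1 - x ^ 2) = π / 4 := by
  have hint : ∀ a b : ℝ, IntervalIntegrable (fun x => Real.sqrt (1 - x ^ 2)) MeasureTheory.volume a b :=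
    fun a b => (Continuous.sqrt (by continuity)).intervalIntegrable a b
  have hsymm : ∫ x in (-1:ℝ)..0, Real.sqrt (1 - x ^ 2)
      = ∫ x in (0:ℝ)..1, Real.sqrt (1 - x ^ 2) := by
    have := intervalIntegral.integral_comp_neg (a := (0:ℝ)) (b := 1)
      (fun x => Real.sqrt (1 - x ^ 2))
    simp only [neg_zero, neg_neg, neg_sq] at this
    rw [← this]
  have hadd := intervalIntegral.integral_add_adjacent_intervals
      (hint (-1) 0) (hint 0 1)
  have h1 := integral_sqrt_one_sub_sq
  rw [← hadd, hsymm] at h1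
  linarith

lemma sqrt_int (τ : ℝ) (hτ : 0 < τ) :
    ∫ r in (0:ℝ)..τ, Real.sqrt (τ ^ 2 - r ^ 2) = π * τ ^ 2 / 4 := by
  have hτ' : τ ≠ 0 := ne_of_gt hτ
  have heq : ∀ r : ℝ, Real.sqrt (τ ^ 2 - r ^ 2) = τ * Real.sqrt (1 - (r / τ) ^ 2) := by
    intro r
    rw [show τ ^ 2 - r ^ 2 = τ ^ 2 * (1 - (r / τ) ^ 2) by field_simp,
      Real.sqrt_mul (sq_nonneg τ), Real.sqrt_sq hτ.le]
  calc ∫ r in (0:ℝ)..τ, Real.sqrt (τ ^ 2 - r ^ 2)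
      = ∫ r in (0:ℝ)..τ, τ * Real.sqrt (1 - (r / τ) ^ 2) := by
        simp_rw [heq]
    _ = τ * ∫ r in (0:ℝ)..τ, Real.sqrt (1 - (r / τ) ^ 2) :=
        intervalIntegral.integral_const_mul _ _
    _ = τ * (τ • ∫ x in (0:ℝ)/τ..τ/τ, Real.sqrt (1 - x ^ 2)) := by
        rw [intervalIntegral.integral_comp_div (fun x => Real.sqrt (1 - x ^ 2)) hτ']
    _ = π * τ ^ 2 / 4 := by
        rw [zero_div, div_self hτ', half_sqrt]
        simp [smul_eq_mul]; ring

/-- Asymptotic void-probability exponent in Lemma 4: for `c > 0` and `τ > 0`,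
`2 n ∫₀^τ (1 - exp (-(2c/n) √(τ² - r²))) dr → c π τ²` as `n → +∞`. -/
theorem stmt_15 (c τ : ℝ) (hc : 0 < c) (hτ : 0 < τ) :
    Tendsto
      (fun n : ℝ => 2 * n * ∫ r in (0 : ℝ)..τ,
        (1 - Real.exp (-((2 * c / n) * Real.sqrt (τ ^ 2 - r ^ 2)))))
      atTop (nhds (c * π * τ ^ 2)) := by
  have hcont : Continuous fun r : ℝ => Real.sqrt (τ ^ 2 - r ^ 2) :=
    Continuous.sqrt (by continuity)
  -- lower bound function
  have hL : Tendsto (fun n : ℝ => c * π * τ ^ 2 * Real.exp (-(2 * c * τ / n)))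
      atTop (nhds (c * π * τ ^ 2)) := by
    have h0 : Tendsto (fun n : ℝ => 2 * c * τ / n) atTop (nhds 0) :=
      Tendsto.div_atTop tendsto_const_nhds tendsto_id
    have hneg : Tendsto (fun n : ℝ => -(2 * c * τ / n)) atTop (nhds 0) := by simpa using h0.neg
    have := (Real.continuous_exp.tendsto 0).comp hneg
    simp only [neg_zero, Real.exp_zero] at this
    simpa using tendsto_const_nhds.mul this
  refine tendsto_of_tendsto_of_tendsto_of_le_of_le' hL tendsto_const_nhds
    ?_ ?_
  · -- lower ≤ F
    filter_upwards [eventually_gt_atTop (0 : ℝ)] with n hn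
    have hn' : n ≠ 0 := ne_of_gt hn
    have ha : 0 < 2 * c / n := by positivity
    have hmono : (∫ r in (0:ℝ)..τ,
          (2 * c / n * Real.exp (-(2 * c * τ / n))) * Real.sqrt (τ ^ 2 - r ^ 2))
        ≤ ∫ r in (0:ℝ)..τ,
          (1 - Real.exp (-((2 * c / n) * Real.sqrt (τ ^ 2 - r ^ 2)))) := by
      apply intervalIntegral.integral_mono_on hτ.le
      · exact (continuous_const.mul hcont).intervalIntegrable _ _
      · exact (continuous_const.sub
          (Real.continuous_exp.comp (by continuity))).intervalIntegrable _ _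
      · intro r _
        set s := Real.sqrt (τ ^ 2 - r ^ 2) with hs
        have hs0 : 0 ≤ s := Real.sqrt_nonneg _
        have hsτ : s ≤ τ := by
          rw [hs]
          calc Real.sqrt (τ ^ 2 - r ^ 2) ≤ Real.sqrt (τ ^ 2) :=
                Real.sqrt_le_sqrt (by nlinarith)
            _ = τ := Real.sqrt_sq hτ.le
        set x := 2 * c / n * s with hx
        have hx0 : 0 ≤ x := by positivity
        have hxK : x ≤ 2 * c * τ / n := by
          rw [hx]
          calc 2 * c / n * s ≤ 2 * c / n * τ := by
                exact mul_le_mul_of_nonneg_left hsτ ha.le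
            _ = 2 * c * τ / n := by ring
        have h1 : Real.exp (-(2 * c * τ / n)) ≤ Real.exp (-x) :=
          Real.exp_le_exp.mpr (by linarith)
        have h2 : x * Real.exp (-x) ≤ 1 - Real.exp (-x) := by
          have hh : x + 1 ≤ Real.exp x := Real.add_one_le_exp x
          have hm : Real.exp (-x) * Real.exp x = 1 := by
            rw [← Real.exp_add]; simp
          nlinarith [Real.exp_pos (-x)]
        calc 2 * c / n * Real.exp (-(2 * c * τ / n)) * s
            = x * Real.exp (-(2 * c * τ / n)) := by rw [hx]; ring
          _ ≤ x * Real.exp (-x) := mul_le_mul_of_nonneg_left h1 hx0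
          _ ≤ 1 - Real.exp (-x) := h2
    have hval : (∫ r in (0:ℝ)..τ,
          (2 * c / n * Real.exp (-(2 * c * τ / n))) * Real.sqrt (τ ^ 2 - r ^ 2))
        = 2 * c / n * Real.exp (-(2 * c * τ / n)) * (π * τ ^ 2 / 4) := by
      rw [intervalIntegral.integral_const_mul, sqrt_int τ hτ]
    calc c * π * τ ^ 2 * Real.exp (-(2 * c * τ / n))
        = 2 * n * (2 * c / n * Real.exp (-(2 * c * τ / n)) * (π * τ ^ 2 / 4)) := by
          field_simp; ring
      _ ≤ 2 * n * ∫ r in (0:ℝ)..τ,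
            (1 - Real.exp (-((2 * c / n) * Real.sqrt (τ ^ 2 - r ^ 2)))) := by
          rw [← hval]
          exact mul_le_mul_of_nonneg_left hmono (by positivity)
  · -- F ≤ upper
    filter_upwards [eventually_gt_atTop (0 : ℝ)] with n hn
    have hn' : n ≠ 0 := ne_of_gt hn
    have hmono : (∫ r in (0:ℝ)..τ,
          (1 - Real.exp (-((2 * c / n) * Real.sqrt (τ ^ 2 - r ^ 2)))))
        ≤ ∫ r in (0:ℝ)..τ, (2 * c / n) * Real.sqrt (τ ^ 2 - r ^ 2) := by
      apply intervalIntegral.integral_mono_on hτ.le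
      · exact (continuous_const.sub
          (Real.continuous_exp.comp (by continuity))).intervalIntegrable _ _
      · exact (continuous_const.mul hcont).intervalIntegrable _ _
      · intro r _
        have := Real.add_one_le_exp (-((2 * c / n) * Real.sqrt (τ ^ 2 - r ^ 2)))
        linarith
    have hval : (∫ r in (0:ℝ)..τ, (2 * c / n) * Real.sqrt (τ ^ 2 - r ^ 2))
        = 2 * c / n * (π * τ ^ 2 / 4) := by
      rw [intervalIntegral.integral_const_mul, sqrt_int τ hτ]
    calc 2 * n * ∫ r in (0:ℝ)..τ,
          (1 - Real.exp (-((2 * c / n) * Real.sqrt (τ ^ 2 - r ^ 2))))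
        ≤ 2 * n * (2 * c / n * (π * τ ^ 2 / 4)) := by
          rw [← hval]
          exact mul_le_mul_of_nonneg_left hmono (by positivity)
      _ = c * π * τ ^ 2 := by field_simp; ring
end
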